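/- Let G be a non-regular subcubic graph with δ(G) = 2 and weight w as above, and let S be an induced bipartite subgraph maximizing (|E(S)|, w(S)) lexicographically, with bipartition {S₁, S₂}. Let x, y, z be vertices outside S such that x and y have a common neighbor u ∈ V(S) and y and z have a common neighbor v ∈ V(S). If y has exactly 3 neighbors in S, then u and v lie in the same part of the bipartition; if y has exactly 2 neighbors in S, then u and v lie in different parts. -/
import Mathlib


open SimpleGraph Finset

variable {V : Type*}

/-- `A` is an independent set of `G`. -/
def IndepF [Fintype V] [DecidableEq V] (G : SimpleGraph V) (A : Finset V) : Prop :=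
  ∀ x ∈ A, ∀ y ∈ A, ¬ G.Adj x y

/-- Number of edges of `G` between the disjoint independent sets `A` and `B`;
for an induced bipartite subgraph with parts `A`, `B` this is its number of edges. -/
def eb [Fintype V] [DecidableEq V] (G : SimpleGraph V) [DecidableRel G.Adj]
    (A B : Finset V) : ℕ :=
  ∑ x ∈ A, (G.neighborFinset x ∩ B).card

/-- The weight `w(x) = 1 + min { dist(x,u) : d_G(u) = 2 }`. -/
noncomputable def weight [Fintype V] (G : SimpleGraph V) [DecidableRel G.Adj] (x : V) : ℕ :=
  1 + sInf {d : ℕ | ∃ u, G.degree u = 2 ∧ G.dist x u = d}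

/-- Total weight of a set of vertices. -/
noncomputable def weightSum [Fintype V] (G : SimpleGraph V) [DecidableRel G.Adj]
    (A : Finset V) : ℕ :=
  ∑ x ∈ A, weight G x

/-- `S1, S2` are the parts of an induced bipartite subgraph of `G` maximizing
`(|E(S)|, w(S))` lexicographically among all induced bipartite subgraphs of `G`. -/
noncomputable def MaxLexBip [Fintype V] [DecidableEq V] (G : SimpleGraph V)
    [DecidableRel G.Adj] (S1 S2 : Finset V) : Prop :=
  Disjoint S1 S2 ∧ IndepF G S1 ∧ IndepF G S2 ∧
    ∀ T1 T2 : Finset V, Disjoint T1 T2 → IndepF G T1 → IndepF G T2 →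
      eb G T1 T2 < eb G S1 S2 ∨
        (eb G T1 T2 = eb G S1 S2 ∧ weightSum G (T1 ∪ T2) ≤ weightSum G (S1 ∪ S2))

section aux
variable [Fintype V] [DecidableEq V] (G : SimpleGraph V) [DecidableRel G.Adj]

lemma inter_card_eq (x : V) (B : Finset V) :
    (G.neighborFinset x ∩ B).card = ∑ b ∈ B, if G.Adj x b then 1 else 0 := by
  rw [← Finset.card_filter]
  congr 1
  ext b
  simp [SimpleGraph.mem_neighborFinset, and_comm]

lemma eb_comm (A B : Finset V) : eb G A B = eb G B A := by
  simp only [eb, inter_card_eq]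
  rw [Finset.sum_comm]
  refine Finset.sum_congr rfl fun b _ => Finset.sum_congr rfl fun a _ => ?_
  simp [G.adj_comm]

lemma eb_insert_right (A B : Finset V) (y : V) (hy : y ∉ B) :
    eb G A (insert y B) = eb G A B + (G.neighborFinset y ∩ A).card := by
  simp only [eb, inter_card_eq, Finset.sum_insert hy, Finset.sum_add_distrib]
  rw [add_comm]
  congr 1
  refine Finset.sum_congr rfl fun a _ => ?_
  simp [G.adj_comm]

lemma eb_erase_right (A B : Finset V) (v : V) (hv : v ∈ B) :
    eb G A B = eb G A (B.erase v) + (G.neighborFinset v ∩ A).card := by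
  conv_lhs => rw [← Finset.insert_erase hv]
  exact eb_insert_right G A _ v (Finset.notMem_erase v B)

lemma nbr_sub (w : V) (A P : Finset V) (hP : P ⊆ G.neighborFinset w)
    (hPA : ∀ p ∈ P, p ∉ A) : (G.neighborFinset w ∩ A).card + P.card ≤ G.degree w := by
  have hd : Disjoint (G.neighborFinset w ∩ A) P := by
    rw [Finset.disjoint_left]
    intro a ha haP
    exact hPA a haP (Finset.mem_inter.mp ha).2
  have hsub : (G.neighborFinset w ∩ A) ∪ P ⊆ G.neighborFinset w :=
    Finset.union_subset (Finset.inter_subset_left) hP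
  calc (G.neighborFinset w ∩ A).card + P.card = ((G.neighborFinset w ∩ A) ∪ P).card :=
        (Finset.card_union_of_disjoint hd).symm
    _ ≤ (G.neighborFinset w).card := Finset.card_le_card hsub
    _ = G.degree w := (G.card_neighborFinset_eq_degree w).symm

lemma nbr_bound2 (hsub : ∀ v, G.degree v ≤ 3) (w p q : V) (hpq : p ≠ q)
    (hp : G.Adj w p) (hq : G.Adj w q) (A : Finset V) (hpA : p ∉ A) (hqA : q ∉ A) :
    (G.neighborFinset w ∩ A).card ≤ 1 := by
  have h := nbr_sub G w A {p, q} ?_ ?_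
  · have hc : ({p, q} : Finset V).card = 2 := by rw [Finset.card_insert_of_notMem (by simp [hpq]), Finset.card_singleton]
    have := hsub w
    omega
  · intro a ha
    rcases Finset.mem_insert.mp ha with rfl | ha
    · exact G.mem_neighborFinset w a |>.mpr hp
    · rw [Finset.mem_singleton] at ha; subst ha
      exact G.mem_neighborFinset w a |>.mpr hq
  · intro a ha
    rcases Finset.mem_insert.mp ha with rfl | ha
    · exact hpA
    · rw [Finset.mem_singleton] at ha; subst ha; exact hqA

lemma nbr_bound3 (hsub : ∀ v, G.degree v ≤ 3) (w p q r : V) (hpq : p ≠ q) (hpr : p ≠ r)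
    (hqr : q ≠ r) (hp : G.Adj w p) (hq : G.Adj w q) (hr : G.Adj w r) (A : Finset V)
    (hpA : p ∉ A) (hqA : q ∉ A) (hrA : r ∉ A) :
    (G.neighborFinset w ∩ A).card = 0 := by
  have h := nbr_sub G w A {p, q, r} ?_ ?_
  · have hc : ({p, q, r} : Finset V).card = 3 := by
      rw [Finset.card_insert_of_notMem (by simp [hpq, hpr]),
        Finset.card_insert_of_notMem (by simp [hqr]), Finset.card_singleton]
    have := hsub w
    omega
  · intro a ha
    simp only [Finset.mem_insert, Finset.mem_singleton] at ha
    rcases ha with rfl | rfl | rfl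
    · exact G.mem_neighborFinset w a |>.mpr hp
    · exact G.mem_neighborFinset w a |>.mpr hq
    · exact G.mem_neighborFinset w a |>.mpr hr
  · intro a ha
    simp only [Finset.mem_insert, Finset.mem_singleton] at ha
    rcases ha with rfl | rfl | rfl
    · exact hpA
    · exact hqA
    · exact hrA

variable {G}

lemma MaxLexBip.symm' {S1 S2 : Finset V} (h : MaxLexBip G S1 S2) : MaxLexBip G S2 S1 := by
  obtain ⟨hd, h1, h2, hm⟩ := h
  refine ⟨hd.symm, h2, h1, fun T1 T2 ht h1' h2' => ?_⟩
  rw [eb_comm G S2 S1, Finset.union_comm S2 S1]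
  exact hm T1 T2 ht h1' h2'

/-- Core exchange: remove `v` from `S2` and put `y` in; strict edge gain contradicts maximality. -/
lemma core {S1 S2 : Finset V} (hmax : MaxLexBip G S1 S2) (y v : V)
    (hy1 : y ∉ S1) (hy2 : y ∉ S2) (hvS : v ∈ S2)
    (hNy : G.neighborFinset y ∩ S2 ⊆ {v})
    (hgain : (G.neighborFinset v ∩ S1).card < (G.neighborFinset y ∩ S1).card) : False := by
  obtain ⟨hd, h1, h2, hm⟩ := hmax
  set T2 := insert y (S2.erase v) with hT2
  have hyE : y ∉ S2.erase v := fun h => hy2 (Finset.mem_of_mem_erase h)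
  have hdis : Disjoint S1 T2 := by
    rw [hT2, Finset.disjoint_insert_right]
    exact ⟨hy1, hd.mono_right (Finset.erase_subset v S2)⟩
  have hind : IndepF G T2 := by
    intro a ha b hb hab
    rw [hT2, Finset.mem_insert] at ha hb
    rcases ha with rfl | ha
    · rcases hb with rfl | hb
      · exact G.irrefl hab
      · have : b ∈ G.neighborFinset a ∩ S2 :=
          Finset.mem_inter.mpr ⟨(G.mem_neighborFinset a b).mpr hab, Finset.mem_of_mem_erase hb⟩
        have := Finset.mem_singleton.mp (hNy this)
        exact (Finset.ne_of_mem_erase hb) this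
    · rcases hb with rfl | hb
      · have : a ∈ G.neighborFinset b ∩ S2 :=
          Finset.mem_inter.mpr ⟨(G.mem_neighborFinset b a).mpr hab.symm, Finset.mem_of_mem_erase ha⟩
        have := Finset.mem_singleton.mp (hNy this)
        exact (Finset.ne_of_mem_erase ha) this
      · exact h2 a (Finset.mem_of_mem_erase ha) b (Finset.mem_of_mem_erase hb) hab
  have he1 : eb G S1 T2 = eb G S1 (S2.erase v) + (G.neighborFinset y ∩ S1).card :=
    eb_insert_right G S1 _ y hyE
  have he2 : eb G S1 S2 = eb G S1 (S2.erase v) + (G.neighborFinset v ∩ S1).card :=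
    eb_erase_right G S1 S2 v hvS
  rcases hm S1 T2 hdis h1 hind with h | ⟨h, _⟩ <;> omega

lemma core0 {S1 S2 : Finset V} (hmax : MaxLexBip G S1 S2) (y : V)
    (hy1 : y ∉ S1) (hy2 : y ∉ S2)
    (hNy : G.neighborFinset y ∩ S2 = ∅)
    (hgain : 0 < (G.neighborFinset y ∩ S1).card) : False := by
  obtain ⟨hd, h1, h2, hm⟩ := hmax
  set T2 := insert y S2 with hT2
  have hdis : Disjoint S1 T2 := by
    rw [hT2, Finset.disjoint_insert_right]
    exact ⟨hy1, hd⟩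
  have hind : IndepF G T2 := by
    intro a ha b hb hab
    rw [hT2, Finset.mem_insert] at ha hb
    rcases ha with rfl | ha
    · rcases hb with rfl | hb
      · exact G.irrefl hab
      · have : b ∈ G.neighborFinset a ∩ S2 :=
          Finset.mem_inter.mpr ⟨(G.mem_neighborFinset a b).mpr hab, hb⟩
        simp [hNy] at this
    · rcases hb with rfl | hb
      · have : a ∈ G.neighborFinset b ∩ S2 :=
          Finset.mem_inter.mpr ⟨(G.mem_neighborFinset b a).mpr hab.symm, ha⟩
        simp [hNy] at this
      · exact h2 a ha b hb hab
  have he1 : eb G S1 T2 = eb G S1 S2 + (G.neighborFinset y ∩ S1).card :=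
    eb_insert_right G S1 S2 y hy2
  rcases hm S1 T2 hdis h1 hind with h | ⟨h, _⟩ <;> omega

end aux

section cases
variable [Fintype V] [DecidableEq V] {G : SimpleGraph V} [DecidableRel G.Adj]

lemma caseA {S1 S2 : Finset V} (hsub : ∀ v, G.degree v ≤ 3) (hmax : MaxLexBip G S1 S2)
    (x y z u v : V)
    (hx1 : x ∉ S1) (hx2 : x ∉ S2) (hy1 : y ∉ S1) (hy2 : y ∉ S2)
    (hz1 : z ∉ S1) (hz2 : z ∉ S2)
    (hxy : x ≠ y) (hyz : y ≠ z)
    (hu1 : u ∈ S1) (hv2 : v ∈ S2)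
    (hux : G.Adj u x) (huy : G.Adj u y) (hvy : G.Adj v y) (hvz : G.Adj v z)
    (h3 : (G.neighborFinset y ∩ S1).card + (G.neighborFinset y ∩ S2).card = 3) : False := by
  have hmemu : u ∈ G.neighborFinset y ∩ S1 :=
    Finset.mem_inter.mpr ⟨(G.mem_neighborFinset y u).mpr huy.symm, hu1⟩
  have hmemv : v ∈ G.neighborFinset y ∩ S2 :=
    Finset.mem_inter.mpr ⟨(G.mem_neighborFinset y v).mpr hvy.symm, hv2⟩
  have hc1 : 1 ≤ (G.neighborFinset y ∩ S1).card := Finset.card_pos.mpr ⟨u, hmemu⟩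
  have hc2 : 1 ≤ (G.neighborFinset y ∩ S2).card := Finset.card_pos.mpr ⟨v, hmemv⟩
  by_cases h : (G.neighborFinset y ∩ S2).card = 1
  · have hsub2 : G.neighborFinset y ∩ S2 ⊆ {v} := fun b hb =>
      Finset.mem_singleton.mpr (Finset.card_le_one.mp (le_of_eq h) b hb v hmemv)
    have hb := nbr_bound2 G hsub v y z hyz hvy hvz S1 hy1 hz1
    exact core hmax y v hy1 hy2 hv2 hsub2 (by omega)
  · have hc1' : (G.neighborFinset y ∩ S1).card = 1 := by omega
    have hsub1 : G.neighborFinset y ∩ S1 ⊆ {u} := fun b hb =>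
      Finset.mem_singleton.mpr (Finset.card_le_one.mp (le_of_eq hc1') b hb u hmemu)
    have hb := nbr_bound2 G hsub u x y hxy hux huy S2 hx2 hy2
    exact core hmax.symm' y u hy2 hy1 hu1 hsub1 (by omega)

lemma caseB_same {S1 S2 : Finset V} (hmax : MaxLexBip G S1 S2) (y u v : V)
    (hy1 : y ∉ S1) (hy2 : y ∉ S2)
    (hu1 : u ∈ S1) (hv1 : v ∈ S1) (huv : u ≠ v)
    (huy : G.Adj u y) (hvy : G.Adj v y)
    (h2 : (G.neighborFinset y ∩ S1).card + (G.neighborFinset y ∩ S2).card = 2) : False := by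
  have hmemu : u ∈ G.neighborFinset y ∩ S1 :=
    Finset.mem_inter.mpr ⟨(G.mem_neighborFinset y u).mpr huy.symm, hu1⟩
  have hmemv : v ∈ G.neighborFinset y ∩ S1 :=
    Finset.mem_inter.mpr ⟨(G.mem_neighborFinset y v).mpr hvy.symm, hv1⟩
  have hc1 : 2 ≤ (G.neighborFinset y ∩ S1).card := by
    have hss : ({u, v} : Finset V) ⊆ G.neighborFinset y ∩ S1 := by
      intro a ha
      simp only [Finset.mem_insert, Finset.mem_singleton] at ha
      rcases ha with rfl | rfl
      · exact hmemu
      · exact hmemv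
    have hcc : ({u, v} : Finset V).card = 2 := by
      rw [Finset.card_insert_of_notMem (by simp [huv]), Finset.card_singleton]
    calc 2 = ({u, v} : Finset V).card := hcc.symm
      _ ≤ _ := Finset.card_le_card hss
  have hc2 : (G.neighborFinset y ∩ S2) = ∅ := Finset.card_eq_zero.mp (by omega)
  exact core0 hmax y hy1 hy2 hc2 (by omega)

lemma caseB_eq {S1 S2 : Finset V} (hsub : ∀ v, G.degree v ≤ 3) (hmax : MaxLexBip G S1 S2)
    (x y z u : V)
    (hx1 : x ∉ S1) (hx2 : x ∉ S2) (hy1 : y ∉ S1) (hy2 : y ∉ S2)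
    (hz1 : z ∉ S1) (hz2 : z ∉ S2)
    (hxy : x ≠ y) (hyz : y ≠ z) (hxz : x ≠ z)
    (hu1 : u ∈ S1)
    (hux : G.Adj u x) (huy : G.Adj u y) (huz : G.Adj u z)
    (h2 : (G.neighborFinset y ∩ S1).card + (G.neighborFinset y ∩ S2).card = 2) : False := by
  have hmemu : u ∈ G.neighborFinset y ∩ S1 :=
    Finset.mem_inter.mpr ⟨(G.mem_neighborFinset y u).mpr huy.symm, hu1⟩
  have hc1 : 1 ≤ (G.neighborFinset y ∩ S1).card := Finset.card_pos.mpr ⟨u, hmemu⟩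
  have hb1 : (G.neighborFinset u ∩ S1).card = 0 :=
    nbr_bound3 G hsub u x y z hxy hxz hyz hux huy huz S1 hx1 hy1 hz1
  have hb2 : (G.neighborFinset u ∩ S2).card = 0 :=
    nbr_bound3 G hsub u x y z hxy hxz hyz hux huy huz S2 hx2 hy2 hz2
  by_cases h : (G.neighborFinset y ∩ S2).card = 0
  · exact core0 hmax y hy1 hy2 (Finset.card_eq_zero.mp h) (by omega)
  · have hc1' : (G.neighborFinset y ∩ S1).card = 1 := by omega
    have hsub1 : G.neighborFinset y ∩ S1 ⊆ {u} := fun b hb =>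
      Finset.mem_singleton.mpr (Finset.card_le_one.mp (le_of_eq hc1') b hb u hmemu)
    exact core hmax.symm' y u hy2 hy1 hu1 hsub1 (by omega)

end cases

theorem stmt9 [Fintype V] [DecidableEq V] (G : SimpleGraph V) [DecidableRel G.Adj]
    (hsub : ∀ v, G.degree v ≤ 3) (hδ : ∀ v, 2 ≤ G.degree v) (hex : ∃ u, G.degree u = 2)
    (S1 S2 : Finset V) (hmax : MaxLexBip G S1 S2)
    (x y z u v : V)
    (hx : x ∉ S1 ∪ S2) (hy : y ∉ S1 ∪ S2) (hz : z ∉ S1 ∪ S2)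
    (hxy : x ≠ y) (hyz : y ≠ z) (hxz : x ≠ z)
    (hu : u ∈ S1 ∪ S2) (hv : v ∈ S1 ∪ S2)
    (hux : G.Adj u x) (huy : G.Adj u y) (hvy : G.Adj v y) (hvz : G.Adj v z) :
    ((G.neighborFinset y ∩ (S1 ∪ S2)).card = 3 →
      (u ∈ S1 ∧ v ∈ S1) ∨ (u ∈ S2 ∧ v ∈ S2)) ∧
    ((G.neighborFinset y ∩ (S1 ∪ S2)).card = 2 →
      (u ∈ S1 ∧ v ∈ S2) ∨ (u ∈ S2 ∧ v ∈ S1)) := by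
  simp only [Finset.mem_union, not_or] at hx hy hz
  obtain ⟨hx1, hx2⟩ := hx
  obtain ⟨hy1, hy2⟩ := hy
  obtain ⟨hz1, hz2⟩ := hz
  have hdis := hmax.1
  have hsplit : (G.neighborFinset y ∩ (S1 ∪ S2)).card =
      (G.neighborFinset y ∩ S1).card + (G.neighborFinset y ∩ S2).card := by
    rw [Finset.inter_union_distrib_left,
      Finset.card_union_of_disjoint (hdis.mono Finset.inter_subset_right Finset.inter_subset_right)]
  constructor
  · intro h3'
    have h3 : (G.neighborFinset y ∩ S1).card + (G.neighborFinset y ∩ S2).card = 3 := by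
      omega
    rcases Finset.mem_union.mp hu with hu1 | hu2
    · refine Or.inl ⟨hu1, ?_⟩
      by_contra hv1
      have hv2 : v ∈ S2 := (Finset.mem_union.mp hv).resolve_left hv1
      exact caseA hsub hmax x y z u v hx1 hx2 hy1 hy2 hz1 hz2 hxy hyz hu1 hv2 hux huy hvy hvz h3
    · refine Or.inr ⟨hu2, ?_⟩
      by_contra hv2
      have hv1 : v ∈ S1 := (Finset.mem_union.mp hv).resolve_right hv2
      exact caseA hsub hmax.symm' x y z u v hx2 hx1 hy2 hy1 hz2 hz1 hxy hyz hu2 hv1 hux huy hvy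
        hvz (by omega)
  · intro h2'
    have h2 : (G.neighborFinset y ∩ S1).card + (G.neighborFinset y ∩ S2).card = 2 := by
      omega
    by_cases huv : u = v
    · subst huv
      rcases Finset.mem_union.mp hu with hu1 | hu2
      · exact (caseB_eq hsub hmax x y z u hx1 hx2 hy1 hy2 hz1 hz2 hxy hyz hxz hu1 hux huy hvz
          h2).elim
      · exact (caseB_eq hsub hmax.symm' x y z u hx2 hx1 hy2 hy1 hz2 hz1 hxy hyz hxz hu2 hux huy
          hvz (by omega)).elim
    · rcases Finset.mem_union.mp hu with hu1 | hu2
      · refine Or.inl ⟨hu1, ?_⟩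
        by_contra hv2
        have hv1 : v ∈ S1 := (Finset.mem_union.mp hv).resolve_right hv2
        exact (caseB_same hmax y u v hy1 hy2 hu1 hv1 huv huy hvy h2).elim
      · refine Or.inr ⟨hu2, ?_⟩
        by_contra hv1
        have hv2 : v ∈ S2 := (Finset.mem_union.mp hv).resolve_left hv1
        exact (caseB_same hmax.symm' y u v hy2 hy1 hu2 hv2 huv huy hvy (by omega)).elim
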